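/- Let n ≥ 2, α ∈ (0,1), and define the Poisson kernel of the half space by P(y', s) = Γ(n/2) π^{−n/2} s (|y'|² + s²)^{−n/2} for y' ∈ ℝⁿ⁻¹ and s > 0. There exists a constant C > 0 depending only on n and α such that for every bounded continuous g : ℝⁿ⁻¹ → ℝ with finite Hölder seminorm [g]^{(α)} = sup{ |g(x')−g(y')|/|x'−y'|^α : x' ≠ y' } < ∞, every s > 0 and every j ∈ {1, …, n−1}, the function u(x') = ∫_{ℝⁿ⁻¹} P(x'−y', s) g(y') dy' has a partial derivative ∂u/∂xⱼ at every x' ∈ ℝⁿ⁻¹, and |∂u/∂xⱼ(x')| ≤ C s^{α−1} [g]^{(α)}. -/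

import Mathlib

/-!
Differentiating under the integral sign, `∂ⱼu(x') = ∫ ∂ⱼP(x' - y', s) g(y') dy'`, the derivative
being dominated near `r = 0` by `(|x' - y'|² + s²)^(-(n+1)/2)`, which is integrable on `ℝⁿ⁻¹`.
The kernel `∂ⱼP(·, s)` is odd, so its integral vanishes and `g(y')` may be replaced by
`g(y') - g(x')`. With `c = Γ(n/2) π^(-n/2)`, the Hölder bound then gives
`|∂ⱼu(x')| ≤ n c s [g] ∫ |z|^(1+α) (|z|² + s²)^(-n/2-1) dz`, and the substitution `z = s w` shows
that this integral is `s^(α-2)` times its value at `s = 1`, which is finite because `α < 1`.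
-/

open MeasureTheory Set Metric Filter

noncomputable section

abbrev En (n : ℕ) := EuclideanSpace ℝ (Fin n)

/-- the `i`-th standard basis vector of `ℝⁿ`. -/
def eb (n : ℕ) (i : Fin n) : En n := EuclideanSpace.single i 1

/-- the Laplacian `Δf`, computed as the sum of the second derivatives in the
coordinate directions. -/
def vlap {n : ℕ} {F : Type*} [NormedAddCommGroup F] [NormedSpace ℝ F]
    (f : En n → F) (x : En n) : F :=
  ∑ i, fderiv ℝ (fun y => fderiv ℝ f y (eb n i)) x (eb n i)

/-- the divergence `div v = Σⱼ ∂vʲ/∂xⱼ` of a vector field. -/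
def vdiv {n : ℕ} (v : En n → En n) (x : En n) : ℝ :=
  ∑ i, fderiv ℝ v x (eb n i) i

/-- the index of the last coordinate of `ℝⁿ`. -/
def lastIdx (n : ℕ) (hn : 2 ≤ n) : Fin n := ⟨n - 1, by omega⟩

/-- the last coordinate `xₙ` of a point of `ℝⁿ`. -/
def xlast (n : ℕ) (hn : 2 ≤ n) (x : En n) : ℝ := x (lastIdx n hn)

/-- the open upper half space `ℝⁿ₊ = {x : xₙ > 0}`. -/
def openHalf (n : ℕ) (hn : 2 ≤ n) : Set (En n) := {x : En n | 0 < xlast n hn x}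

/-- the closed upper half space `{x : xₙ ≥ 0}`. -/
def closedHalf (n : ℕ) (hn : 2 ≤ n) : Set (En n) := {x : En n | 0 ≤ xlast n hn x}

/-- the Poisson kernel of the half space,
`P(y', s) = Γ(n/2) π^{−n/2} s (|y'|² + s²)^{−n/2}`. -/
def poissonK (n : ℕ) (y : En (n - 1)) (s : ℝ) : ℝ :=
  Real.Gamma ((n : ℝ) / 2) * Real.pi ^ (-(n : ℝ) / 2) * s *
    (‖y‖ ^ 2 + s ^ 2) ^ (-(n : ℝ) / 2)


open MeasureTheory Set Metric Filter Module Real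

section RadialIntegrals

variable {E : Type*} [NormedAddCommGroup E] [NormedSpace ℝ E] [FiniteDimensional ℝ E]
  [MeasurableSpace E] [BorelSpace E] (μ : Measure E) [μ.IsAddHaarMeasure]

theorem integrable_norm_sq_add_rpow_neg {a β : ℝ} (ha : 0 < a)
    (hβ : (finrank ℝ E : ℝ) < 2 * β) :
    Integrable (fun z : E => (‖z‖ ^ 2 + a) ^ (-β)) μ := by
  have hβ₀ : 0 ≤ β := by linarith [(finrank ℝ E).cast_nonneg (α := ℝ)]
  have hκ : 0 < min a 1 := lt_min ha one_pos
  refine ((integrable_rpow_neg_one_add_norm_sq (μ := μ) hβ).const_mul (min a 1 ^ (-β))).mono'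
    (Measurable.aestronglyMeasurable (by fun_prop)) (ae_of_all _ fun z => ?_)
  have hle : min a 1 * (1 + ‖z‖ ^ 2) ≤ ‖z‖ ^ 2 + a := by
    nlinarith [min_le_left a 1, min_le_right a 1, sq_nonneg ‖z‖]
  rw [norm_of_nonneg (by positivity), show -(2 * β) / 2 = -β by ring,
    ← mul_rpow hκ.le (by positivity)]
  exact rpow_le_rpow_of_nonpos (by positivity) hle (by linarith)

theorem integrable_norm_rpow_mul_norm_sq_add_rpow {a b c : ℝ} (ha : 0 ≤ a) (hc : 0 < c)
    (hab : (finrank ℝ E : ℝ) < -(a + 2 * b)) :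
    Integrable (fun z : E => ‖z‖ ^ a * (‖z‖ ^ 2 + c) ^ b) μ := by
  refine (integrable_norm_sq_add_rpow_neg μ (β := -(a / 2 + b)) hc (by linarith)).mono'
    (Measurable.aestronglyMeasurable (by fun_prop)) (ae_of_all _ fun z => ?_)
  have hnorm : ‖z‖ ^ a ≤ (‖z‖ ^ 2 + c) ^ (a / 2) :=
    calc ‖z‖ ^ a = (‖z‖ ^ 2) ^ (a / 2) := by
          rw [← rpow_natCast, ← rpow_mul (norm_nonneg z)]; ring_nf
      _ ≤ (‖z‖ ^ 2 + c) ^ (a / 2) := rpow_le_rpow (by positivity) (by linarith) (by linarith)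
  rw [norm_of_nonneg (by positivity), neg_neg, rpow_add (by positivity)]
  exact mul_le_mul_of_nonneg_right hnorm (by positivity)

theorem integral_norm_rpow_mul_norm_sq_add_sq_rpow {s : ℝ} (hs : 0 < s) (a b : ℝ) :
    ∫ z, ‖z‖ ^ a * (‖z‖ ^ 2 + s ^ 2) ^ b ∂μ =
      s ^ ((finrank ℝ E : ℝ) + a + 2 * b) * ∫ w, ‖w‖ ^ a * (‖w‖ ^ 2 + 1) ^ b ∂μ := by
  have hscale : ∀ w : E, ‖s • w‖ ^ a * (‖s • w‖ ^ 2 + s ^ 2) ^ b =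
      s ^ (a + 2 * b) * (‖w‖ ^ a * (‖w‖ ^ 2 + 1) ^ b) := fun w => by
    rw [norm_smul, norm_of_nonneg hs.le, mul_rpow hs.le (norm_nonneg w),
      show (s * ‖w‖) ^ 2 + s ^ 2 = s ^ 2 * (‖w‖ ^ 2 + 1) by ring,
      mul_rpow (by positivity) (by positivity), ← rpow_natCast, ← rpow_mul hs.le,
      rpow_add hs]
    push_cast; ring
  have h := Measure.integral_comp_smul μ (fun z : E => ‖z‖ ^ a * (‖z‖ ^ 2 + s ^ 2) ^ b) s
  simp only [hscale, integral_const_mul, smul_eq_mul] at h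
  rw [abs_of_pos (by positivity), ← rpow_natCast] at h
  rw [add_assoc, rpow_add hs, mul_assoc, h, ← mul_assoc,
    mul_inv_cancel₀ (by positivity), one_mul]

end RadialIntegrals

theorem Function.Odd.integral_eq_zero {G F : Type*} [MeasurableSpace G] [AddGroup G]
    [MeasurableNeg G] [NormedAddCommGroup F] [NormedSpace ℝ F] {μ : Measure G}
    [μ.IsNegInvariant] {f : G → F} (hf : f.Odd) : ∫ x, f x ∂μ = 0 := by
  have h := integral_neg_eq_self f μ
  rw [funext hf, integral_neg] at h
  rw [neg_eq_iff_add_eq_zero, ← two_smul ℝ, smul_eq_zero] at h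
  exact h.resolve_left two_ne_zero

theorem norm_add_sq_add_sq_rpow_neg_le {E : Type*} [SeminormedAddCommGroup E] (z v : E)
    {s β : ℝ} (hs : 0 < s) (hβ : 0 ≤ β) (hv : ‖v‖ ≤ s / 2) :
    (‖z + v‖ ^ 2 + s ^ 2) ^ (-β) ≤ 2 ^ β * (‖z‖ ^ 2 + s ^ 2) ^ (-β) := by
  have htri : ‖z‖ ≤ ‖z + v‖ + ‖v‖ := by simpa using norm_sub_le (z + v) v
  have hhalf : (‖z‖ ^ 2 + s ^ 2) / 2 ≤ ‖z + v‖ ^ 2 + s ^ 2 := by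
    nlinarith [norm_nonneg v, norm_nonneg z, sq_nonneg (‖z + v‖ - ‖v‖)]
  calc (‖z + v‖ ^ 2 + s ^ 2) ^ (-β) ≤ ((‖z‖ ^ 2 + s ^ 2) / 2) ^ (-β) :=
        rpow_le_rpow_of_nonpos (by positivity) hhalf (by linarith)
    _ = 2 ^ β * (‖z‖ ^ 2 + s ^ 2) ^ (-β) := by
        rw [div_rpow (by positivity) zero_le_two, rpow_neg zero_le_two, div_inv_eq_mul, mul_comm]

def poissonConst (n : ℕ) : ℝ := Real.Gamma ((n : ℝ) / 2) * Real.pi ^ (-(n : ℝ) / 2)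

theorem poissonConst_nonneg (n : ℕ) : 0 ≤ poissonConst n := by
  unfold poissonConst; positivity

def poissonKDeriv (n : ℕ) (z e : En (n - 1)) (s : ℝ) : ℝ :=
  -(n * poissonConst n * s) * (‖z‖ ^ 2 + s ^ 2) ^ (-(n : ℝ) / 2 - 1) * inner ℝ z e

theorem finrank_En_sub_one {n : ℕ} (hn : 1 ≤ n) : (finrank ℝ (En (n - 1)) : ℝ) = n - 1 := by
  rw [finrank_euclideanSpace_fin, Nat.cast_sub hn, Nat.cast_one]

section PoissonKernel

variable {n : ℕ} {s : ℝ}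

theorem poissonK_eq (z : En (n - 1)) :
    poissonK n z s = poissonConst n * s * (‖z‖ ^ 2 + s ^ 2) ^ (-(n : ℝ) / 2) := rfl

theorem continuous_poissonK (hs : s ≠ 0) : Continuous fun z : En (n - 1) => poissonK n z s :=
  continuous_const.mul <| (by fun_prop : Continuous fun z : En (n - 1) => ‖z‖ ^ 2 + s ^ 2)
    |>.rpow_const fun _ => Or.inl (by positivity)

theorem continuous_poissonKDeriv (hs : s ≠ 0) (e : En (n - 1)) :
    Continuous fun z => poissonKDeriv n z e s :=
  (continuous_const.mul <| (by fun_prop : Continuous fun z : En (n - 1) => ‖z‖ ^ 2 + s ^ 2)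
    |>.rpow_const fun _ => Or.inl (by positivity)).mul (by fun_prop)

theorem hasDerivAt_poissonK_add_smul (hs : s ≠ 0) (z e : En (n - 1)) (r : ℝ) :
    HasDerivAt (fun t : ℝ => poissonK n (z + t • e) s) (poissonKDeriv n (z + r • e) e s) r := by
  have hline : HasDerivAt (fun t : ℝ => z + t • e) e r := by
    simpa using ((hasDerivAt_id r).smul_const e).const_add z
  have hpow := (hline.norm_sq.add_const (s ^ 2)).rpow_const (p := -(n : ℝ) / 2)
    (Or.inl (by positivity))
  exact (hpow.const_mul (poissonConst n * s)).congr_deriv (by unfold poissonKDeriv; ring)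

theorem poissonKDeriv_odd (e : En (n - 1)) :
    Function.Odd fun z => poissonKDeriv n z e s := fun z => by
  simp only [poissonKDeriv, norm_neg, inner_neg_left]; ring

theorem abs_poissonKDeriv_le (z : En (n - 1)) {e : En (n - 1)} (he : ‖e‖ ≤ 1) (hs : 0 ≤ s) :
    |poissonKDeriv n z e s| ≤
      n * poissonConst n * s * (‖z‖ * (‖z‖ ^ 2 + s ^ 2) ^ (-(n : ℝ) / 2 - 1)) := by
  have hinner : |inner ℝ z e| ≤ ‖z‖ :=
    (abs_real_inner_le_norm z e).trans (mul_le_of_le_one_right (norm_nonneg z) he)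
  have hc := poissonConst_nonneg n
  rw [poissonKDeriv, abs_mul, abs_mul, abs_neg, abs_of_nonneg (by positivity),
    abs_of_nonneg (by positivity), mul_comm ‖z‖, ← mul_assoc]
  gcongr

theorem abs_poissonKDeriv_le_rpow (z : En (n - 1)) {e : En (n - 1)} (he : ‖e‖ ≤ 1)
    (hs : 0 ≤ s) :
    |poissonKDeriv n z e s| ≤
      n * poissonConst n * s * (‖z‖ ^ 2 + s ^ 2) ^ (-(((n : ℝ) + 1) / 2)) := by
  have hsqrt : ‖z‖ ≤ (‖z‖ ^ 2 + s ^ 2) ^ (1 / 2 : ℝ) := by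
    rw [← sqrt_eq_rpow]
    exact le_sqrt_of_sq_le (by nlinarith)
  have hc := poissonConst_nonneg n
  refine (abs_poissonKDeriv_le z he hs).trans (mul_le_mul_of_nonneg_left ?_ (by positivity))
  calc ‖z‖ * (‖z‖ ^ 2 + s ^ 2) ^ (-(n : ℝ) / 2 - 1)
      ≤ (‖z‖ ^ 2 + s ^ 2) ^ (1 / 2 : ℝ) * (‖z‖ ^ 2 + s ^ 2) ^ (-(n : ℝ) / 2 - 1) := by gcongr
    _ = (‖z‖ ^ 2 + s ^ 2) ^ (-(((n : ℝ) + 1) / 2)) := by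
      rw [← rpow_add' (by positivity) (by linarith [n.cast_nonneg (α := ℝ)] : _ < (0 : ℝ)).ne]
      ring_nf

theorem abs_poissonKDeriv_add_le (z : En (n - 1)) {v e : En (n - 1)} (hv : ‖v‖ ≤ s / 2)
    (he : ‖e‖ ≤ 1) (hs : 0 < s) :
    |poissonKDeriv n (z + v) e s| ≤
      2 ^ (((n : ℝ) + 1) / 2) *
        (n * poissonConst n * s * (‖z‖ ^ 2 + s ^ 2) ^ (-(((n : ℝ) + 1) / 2))) := by
  have hc := poissonConst_nonneg n
  calc |poissonKDeriv n (z + v) e s|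
      ≤ n * poissonConst n * s * (‖z + v‖ ^ 2 + s ^ 2) ^ (-(((n : ℝ) + 1) / 2)) :=
        abs_poissonKDeriv_le_rpow _ he hs.le
    _ ≤ n * poissonConst n * s *
          (2 ^ (((n : ℝ) + 1) / 2) * (‖z‖ ^ 2 + s ^ 2) ^ (-(((n : ℝ) + 1) / 2))) := by
        gcongr
        exact norm_add_sq_add_sq_rpow_neg_le _ _ hs (by positivity) hv
    _ = _ := by ring

theorem integrable_poissonKDeriv (hn : 1 ≤ n) (hs : 0 < s) {e : En (n - 1)} (he : ‖e‖ ≤ 1) :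
    Integrable fun z => poissonKDeriv n z e s :=
  ((integrable_norm_sq_add_rpow_neg volume (β := ((n : ℝ) + 1) / 2) (pow_pos hs 2)
    (by rw [finrank_En_sub_one hn]; linarith)).const_mul (n * poissonConst n * s)).mono'
    (continuous_poissonKDeriv hs.ne' e).aestronglyMeasurable
    (ae_of_all _ fun z => abs_poissonKDeriv_le_rpow z he hs.le)

theorem integrable_poissonK_mul (hn : 1 ≤ n) (hs : 0 < s) {g : En (n - 1) → ℝ}
    (hg : Continuous g) {B : ℝ} (hB : ∀ y, |g y| ≤ B) (x : En (n - 1)) :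
    Integrable fun y => poissonK n (x - y) s * g y := by
  have hc := poissonConst_nonneg n
  refine (((integrable_norm_sq_add_rpow_neg volume (β := (n : ℝ) / 2) (pow_pos hs 2)
    (by rw [finrank_En_sub_one hn]; linarith)).comp_sub_left x).const_mul
    (poissonConst n * s * B)).mono'
    (((continuous_poissonK hs.ne').comp (by fun_prop)).mul hg).aestronglyMeasurable
    (ae_of_all _ fun y => ?_)
  rw [poissonK_eq, norm_mul, norm_of_nonneg (by positivity), neg_div, norm_eq_abs,
    mul_right_comm _ B]
  exact mul_le_mul_of_nonneg_left (hB y) (by positivity)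

theorem hasDerivAt_integral_poissonK_mul (hn : 1 ≤ n) {g : En (n - 1) → ℝ}
    (hg : Continuous g) {B : ℝ} (hB : ∀ y, |g y| ≤ B) (hs : 0 < s)
    {e : En (n - 1)} (he : ‖e‖ ≤ 1) (x : En (n - 1)) :
    HasDerivAt (fun r : ℝ => ∫ y, poissonK n (x + r • e - y) s * g y)
      (∫ y, poissonKDeriv n (x - y) e s * g y) 0 := by
  have hB₀ : 0 ≤ B := (abs_nonneg _).trans (hB 0)
  have hshift : ∀ (r : ℝ) y, x + r • e - y = x - y + r • e := fun _ _ => by abel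
  simp_rw [hshift]
  have hcont : ∀ r : ℝ, Continuous fun y => x - y + r • e := fun r => by fun_prop
  have hbound : ∀ y, ∀ r ∈ ball (0 : ℝ) (s / 2), ‖poissonKDeriv n (x - y + r • e) e s * g y‖ ≤
      2 ^ (((n : ℝ) + 1) / 2) *
        (n * poissonConst n * s * (‖x - y‖ ^ 2 + s ^ 2) ^ (-(((n : ℝ) + 1) / 2))) * B :=
    fun y r hr => by
      have hre : ‖r • e‖ ≤ s / 2 := by
        rw [norm_smul]
        exact (mul_le_of_le_one_right (norm_nonneg r) he).trans (mem_ball_zero_iff.mp hr).le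
      rw [norm_mul, norm_eq_abs, norm_eq_abs]
      exact mul_le_mul (abs_poissonKDeriv_add_le _ hre he hs) (hB y) (abs_nonneg _)
        (by have := poissonConst_nonneg n; positivity)
  have hbound_int := (((integrable_norm_sq_add_rpow_neg volume (β := ((n : ℝ) + 1) / 2)
    (pow_pos hs 2) (by rw [finrank_En_sub_one hn]; linarith)).comp_sub_left x).const_mul
    (2 ^ (((n : ℝ) + 1) / 2) * (n * poissonConst n * s))).mul_const B
  have h := (hasDerivAt_integral_of_dominated_loc_of_deriv_le (μ := volume) (x₀ := 0)
    (F := fun r y => poissonK n (x - y + r • e) s * g y)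
    (F' := fun r y => poissonKDeriv n (x - y + r • e) e s * g y)
    (ball_mem_nhds (0 : ℝ) (half_pos hs))
    (Eventually.of_forall fun r =>
      (((continuous_poissonK hs.ne').comp (hcont r)).mul hg).aestronglyMeasurable)
    (by simpa using integrable_poissonK_mul hn hs hg hB x)
    (((continuous_poissonKDeriv hs.ne' e).comp (hcont 0)).mul hg).aestronglyMeasurable
    (ae_of_all _ hbound) (by simpa only [mul_assoc] using hbound_int)
    (ae_of_all _ fun y r _ => (hasDerivAt_poissonK_add_smul hs.ne' (x - y) e r).mul_const (g y))).2
  simpa using h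

theorem integral_poissonKDeriv_mul_eq_integral_mul_sub (hn : 1 ≤ n) (hs : 0 < s)
    {e : En (n - 1)} (he : ‖e‖ ≤ 1) {g : En (n - 1) → ℝ} (x : En (n - 1))
    (hint : Integrable fun y => poissonKDeriv n (x - y) e s * (g y - g x)) :
    ∫ y, poissonKDeriv n (x - y) e s * g y = ∫ y, poissonKDeriv n (x - y) e s * (g y - g x) := by
  have hK_zero : ∫ y, poissonKDeriv n (x - y) e s = 0 := by
    rw [integral_sub_left_eq_self (fun z => poissonKDeriv n z e s) volume x]
    exact (poissonKDeriv_odd e).integral_eq_zero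
  calc ∫ y, poissonKDeriv n (x - y) e s * g y
      = ∫ y, (poissonKDeriv n (x - y) e s * (g y - g x) + poissonKDeriv n (x - y) e s * g x) := by
        congr 1; ext y; ring
    _ = _ := by
        rw [integral_add hint (((integrable_poissonKDeriv hn hs he).comp_sub_left x).mul_const _),
          integral_mul_const, hK_zero, zero_mul, add_zero]

theorem abs_poissonKDeriv_mul_le_of_abs_le {α H δ : ℝ} (hs : 0 ≤ s) (hα : 0 ≤ α)
    (z : En (n - 1)) {e : En (n - 1)} (he : ‖e‖ ≤ 1) (hδ : |δ| ≤ H * ‖z‖ ^ α) :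
    |poissonKDeriv n z e s * δ| ≤
      n * poissonConst n * s * H * (‖z‖ ^ (1 + α) * (‖z‖ ^ 2 + s ^ 2) ^ (-(n : ℝ) / 2 - 1)) := by
  have hc := poissonConst_nonneg n
  have hHz : 0 ≤ H * ‖z‖ ^ α := (abs_nonneg δ).trans hδ
  rw [abs_mul, rpow_add' (norm_nonneg z) (by linarith : (0 : ℝ) < 1 + α).ne', rpow_one]
  calc |poissonKDeriv n z e s| * |δ|
      ≤ (n * poissonConst n * s * (‖z‖ * (‖z‖ ^ 2 + s ^ 2) ^ (-(n : ℝ) / 2 - 1))) *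
          (H * ‖z‖ ^ α) :=
        mul_le_mul (abs_poissonKDeriv_le z he hs) hδ (abs_nonneg _) (by positivity)
    _ = _ := by ring

theorem abs_integral_poissonKDeriv_mul_le (hn : 1 ≤ n) {α : ℝ} (hα₀ : 0 < α)
    (hα₁ : α < 1) {g : En (n - 1) → ℝ} (hg : Continuous g) {H : ℝ}
    (hH : ∀ a b, a ≠ b → |g a - g b| ≤ H * ‖a - b‖ ^ α) (hs : 0 < s)
    {e : En (n - 1)} (he : ‖e‖ ≤ 1) (x : En (n - 1)) :
    |∫ y, poissonKDeriv n (x - y) e s * g y| ≤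
      n * poissonConst n *
        (∫ w : En (n - 1), ‖w‖ ^ (1 + α) * (‖w‖ ^ 2 + 1) ^ (-(n : ℝ) / 2 - 1)) *
          s ^ (α - 1) * H := by
  have hdim := finrank_En_sub_one hn
  set Φ : En (n - 1) → ℝ := fun z => ‖z‖ ^ (1 + α) * (‖z‖ ^ 2 + s ^ 2) ^ (-(n : ℝ) / 2 - 1)
  have hΦ : Integrable Φ := integrable_norm_rpow_mul_norm_sq_add_rpow volume (by linarith)
    (pow_pos hs 2) (by rw [hdim]; linarith)
  have hpoint : ∀ y, |poissonKDeriv n (x - y) e s * (g y - g x)| ≤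
      n * poissonConst n * s * H * Φ (x - y) := fun y =>
    abs_poissonKDeriv_mul_le_of_abs_le hs.le hα₀.le (x - y) he <| by
      rcases eq_or_ne y x with rfl | hyx
      · simp [zero_rpow hα₀.ne']
      · rw [norm_sub_rev]; exact hH y x hyx
  have hKδ : Integrable fun y => poissonKDeriv n (x - y) e s * (g y - g x) :=
    ((hΦ.comp_sub_left x).const_mul _).mono'
      (((continuous_poissonKDeriv hs.ne' e).comp (by fun_prop)).mul
        (by fun_prop)).aestronglyMeasurable
      (ae_of_all _ hpoint)
  have hscale : ∫ z, Φ z = s ^ (α - 2) *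
      ∫ w : En (n - 1), ‖w‖ ^ (1 + α) * (‖w‖ ^ 2 + 1) ^ (-(n : ℝ) / 2 - 1) := by
    rw [integral_norm_rpow_mul_norm_sq_add_sq_rpow volume hs, hdim]
    congr 2; ring
  rw [integral_poissonKDeriv_mul_eq_integral_mul_sub hn hs he x hKδ]
  calc |∫ y, poissonKDeriv n (x - y) e s * (g y - g x)|
      ≤ ∫ y, n * poissonConst n * s * H * Φ (x - y) := by
        rw [← norm_eq_abs]
        exact norm_integral_le_of_norm_le ((hΦ.comp_sub_left x).const_mul _) (ae_of_all _ hpoint)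
    _ = n * poissonConst n * s * H * ∫ z, Φ z := by
        rw [integral_const_mul, integral_sub_left_eq_self Φ volume x]
    _ = _ := by
        rw [hscale, show α - 1 = 1 + (α - 2) by ring, rpow_add hs, rpow_one]; ring

end PoissonKernel

/-- **Estimate (2.10)**: Hölder-improved tangential-derivative estimate of the Poisson
semigroup. -/
theorem poisson_tangential_derivative_holder_estimate
    (n : ℕ) (hn : 2 ≤ n) (α : ℝ) (hα : α ∈ Ioo (0 : ℝ) 1) :
    ∃ C > (0 : ℝ), ∀ g : En (n - 1) → ℝ, Continuous g →
      (∃ B : ℝ, ∀ y : En (n - 1), |g y| ≤ B) →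
      ∀ H : ℝ, (∀ a b : En (n - 1), a ≠ b → |g a - g b| ≤ H * ‖a - b‖ ^ α) →
      ∀ s : ℝ, 0 < s → ∀ j : Fin (n - 1), ∀ x : En (n - 1),
        ∃ d : ℝ,
          HasDerivAt (fun r : ℝ =>
            ∫ y : En (n - 1), poissonK n (x + r • eb (n - 1) j - y) s * g y) d 0 ∧
          |d| ≤ C * s ^ (α - 1) * H := by
  obtain ⟨hα₀, hα₁⟩ := hα
  set J := ∫ w : En (n - 1), ‖w‖ ^ (1 + α) * (‖w‖ ^ 2 + 1) ^ (-(n : ℝ) / 2 - 1)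
  have hJ : 0 ≤ J := integral_nonneg fun w => by positivity
  have hc := poissonConst_nonneg n
  refine ⟨n * poissonConst n * J + 1, by positivity, ?_⟩
  rintro g hg ⟨B, hB⟩ H hH s hs j x
  have he : ‖eb (n - 1) j‖ = 1 := by simp [eb]
  have hH₀ : 0 ≤ H := by
    have h := hH (eb (n - 1) j) 0 (norm_ne_zero_iff.mp (he ▸ one_ne_zero))
    rw [sub_zero, he, one_rpow, mul_one] at h
    exact (abs_nonneg _).trans h
  refine ⟨_, hasDerivAt_integral_poissonK_mul (by omega) hg hB hs he.le x, ?_⟩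
  calc _ ≤ n * poissonConst n * J * s ^ (α - 1) * H :=
        abs_integral_poissonKDeriv_mul_le (by omega) hα₀ hα₁ hg hH hs he.le x
    _ ≤ (n * poissonConst n * J + 1) * s ^ (α - 1) * H := by gcongr; linarith
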